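/- arXiv:math/0511203 — 4 statements merged into one kernel-verified Lean document; each statement's English description precedes it below -/
import Mathlib

section
/- Let (Ω, F, P) be a probability space and let F*, G*, H* be sub-σ-algebras such that F* is independent of H*, G* is independent of H*, and F* and G* are conditionally independent given H*. Then the σ-algebra generated by F* ∪ G* is independent of H*. -/
/-!
For `A ∈ F*` and `B ∈ G*`, independence from `H*` makes `E[1_A | H*]` and `E[1_B | H*]` a.s. the
constants `P A` and `P B`, so conditional independence makes `E[1_{A ∩ B} | H*]` a.s. the constant
`P A * P B`. A set whose conditional indicator is a.s. constant is independent of `H*` (integrate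
over `C ∈ H*`), and the sets `A ∩ B` form a π-system generating `F* ⊔ G*`.
-/

open MeasureTheory ProbabilityTheory

open Set in
theorem IsPiSystem.image2_inter {α : Type*} {C D : Set (Set α)} (hC : IsPiSystem C)
    (hD : IsPiSystem D) : IsPiSystem (image2 (· ∩ ·) C D) := by
  rintro _ ⟨A₁, hA₁, B₁, hB₁, rfl⟩ _ ⟨A₂, hA₂, B₂, hB₂, rfl⟩ hne
  rw [inter_inter_inter_comm] at hne ⊢
  exact mem_image2_of_mem (hC _ hA₁ _ hA₂ hne.left) (hD _ hB₁ _ hB₂ hne.right)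

open Set in
theorem MeasurableSpace.generateFrom_image2_inter_measurableSet {α : Type*}
    (m₁ m₂ : MeasurableSpace α) :
    generateFrom (image2 (· ∩ ·) {s | MeasurableSet[m₁] s} {s | MeasurableSet[m₂] s})
      = m₁ ⊔ m₂ := by
  refine le_antisymm (generateFrom_le ?_) (sup_le (fun s hs ↦ ?_) (fun s hs ↦ ?_))
  · rintro _ ⟨A, hA, B, hB, rfl⟩
    exact (le_sup_left (a := m₁) _ hA).inter (le_sup_right (a := m₁) _ hB)
  · exact measurableSet_generateFrom ⟨s, hs, univ, @MeasurableSet.univ _ m₂, inter_univ s⟩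
  · exact measurableSet_generateFrom ⟨univ, @MeasurableSet.univ _ m₁, s, hs, univ_inter s⟩

section

variable {Ω : Type*} {m m₀ : MeasurableSpace Ω} {μ : Measure Ω}

theorem condExp_indicator_one_ae_eq_measureReal_of_indep {m₁ : MeasurableSpace Ω}
    [IsFiniteMeasure μ] (hm₁ : m₁ ≤ m₀) (hm : m ≤ m₀) (hindep : Indep m₁ m μ) {A : Set Ω}
    (hA : MeasurableSet[m₁] A) :
    μ[A.indicator (fun _ ↦ (1 : ℝ)) | m] =ᵐ[μ] fun _ ↦ μ.real A := by
  refine (condExp_indep_eq hm₁ hm (stronglyMeasurable_const.indicator hA) hindep).trans ?_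
  rw [integral_indicator_const _ (hm₁ _ hA), smul_eq_mul, mul_one]

theorem measureReal_inter_eq_of_condExp_indicator_one_ae_eq_const [IsFiniteMeasure μ]
    (hm : m ≤ m₀) {S C : Set Ω} {c : ℝ} (hS : MeasurableSet S)
    (hc : μ[S.indicator (fun _ ↦ (1 : ℝ)) | m] =ᵐ[μ] fun _ ↦ c) (hC : MeasurableSet[m] C) :
    μ.real (S ∩ C) = c * μ.real C := by
  calc μ.real (S ∩ C) = ∫ ω in C, S.indicator (fun _ ↦ (1 : ℝ)) ω ∂μ := by
        rw [integral_indicator_const _ hS, measureReal_restrict_apply hS, smul_eq_mul, mul_one]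
    _ = ∫ ω in C, μ[S.indicator (fun _ ↦ (1 : ℝ)) | m] ω ∂μ :=
        (setIntegral_condExp hm ((integrable_const 1).indicator hS) hC).symm
    _ = ∫ _ in C, c ∂μ := setIntegral_congr_ae (hm _ hC) (hc.mono fun _ h _ ↦ h)
    _ = c * μ.real C := by rw [setIntegral_const, smul_eq_mul, mul_comm]

theorem measure_inter_eq_mul_of_condExp_indicator_one_ae_eq_const [IsProbabilityMeasure μ]
    (hm : m ≤ m₀) {S C : Set Ω} {c : ℝ} (hS : MeasurableSet S)
    (hc : μ[S.indicator (fun _ ↦ (1 : ℝ)) | m] =ᵐ[μ] fun _ ↦ c) (hC : MeasurableSet[m] C) :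
    μ (S ∩ C) = μ S * μ C := by
  have hSc : μ.real S = c := by
    simpa using measureReal_inter_eq_of_condExp_indicator_one_ae_eq_const hm hS hc
      (@MeasurableSet.univ _ m)
  rw [← ENNReal.toReal_eq_toReal_iff' (measure_ne_top _ _)
    (ENNReal.mul_ne_top (measure_ne_top _ _) (measure_ne_top _ _)), ENNReal.toReal_mul]
  simp only [← measureReal_def, hSc]
  exact measureReal_inter_eq_of_condExp_indicator_one_ae_eq_const hm hS hc hC

end

/-- If `F*` and `G*` are each independent of `H*`, and conditionally independent
given `H*`, then `σ(F* ∪ G*)` is independent of `H*`. -/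
theorem stmt_0 {Ω : Type*} {F : MeasurableSpace Ω} (P : Measure Ω) [IsProbabilityMeasure P]
    (mF mG mH : MeasurableSpace Ω) (hmF : mF ≤ F) (hmG : mG ≤ F) (hmH : mH ≤ F)
    (hFH : Indep mF mH P) (hGH : Indep mG mH P)
    (hcond : ∀ A B : Set Ω, MeasurableSet[mF] A → MeasurableSet[mG] B →
      condExp mH P ((A ∩ B).indicator (fun _ => (1:ℝ))) =ᵐ[P]
        fun ω => (condExp mH P (A.indicator (fun _ => (1:ℝ))) ω) *
          (condExp mH P (B.indicator (fun _ => (1:ℝ))) ω)) :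
    Indep (mF ⊔ mG) mH P := by
  refine IndepSets.indep (sup_le hmF hmG) hmH
    ((@MeasurableSpace.isPiSystem_measurableSet _ mF).image2_inter
      (@MeasurableSpace.isPiSystem_measurableSet _ mG))
    (@MeasurableSpace.isPiSystem_measurableSet _ mH)
    (MeasurableSpace.generateFrom_image2_inter_measurableSet mF mG).symm
    (@MeasurableSpace.generateFrom_measurableSet _ mH).symm ?_
  rw [IndepSets_iff]
  rintro _ C ⟨A, hA, B, hB, rfl⟩ hC
  refine measure_inter_eq_mul_of_condExp_indicator_one_ae_eq_const hmH
    ((hmF _ hA).inter (hmG _ hB)) (c := P.real A * P.real B) ?_ hC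
  filter_upwards [hcond A B hA hB,
    condExp_indicator_one_ae_eq_measureReal_of_indep hmF hmH hFH hA,
    condExp_indicator_one_ae_eq_measureReal_of_indep hmG hmH hGH hB] with ω hAB hA hB
  rw [hAB, hA, hB]
end

section
/- Let q ∈ (0,1), let (ξᵢ)_{i≥0} be i.i.d. Bernoulli(q) random variables, and let (Xᵢ)_{i≥0} be {0,1}-valued random variables, each Bernoulli(1/2), such that Xᵢ = (ξᵢ + X_{i+1}) mod 2 almost surely for all i ≥ 0, with X_{i+1} independent of (ξ₀,…,ξᵢ) for each i. Then X₀ is independent of the σ-algebra σ(ξ₀, ξ₁, ξ₂, …). -/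
/-!
Iterating the recursion gives `X₀ = (ξ₀ + ⋯ + ξᵢ) + X_{i+1}` almost surely. The partial sum is
measurable with respect to `σ(ξ₀, …, ξᵢ)`, while `X_{i+1}` is uniform on `ZMod 2` and independent
of that σ-algebra; adding an independent uniform variable to a measurable one in a finite group
produces a uniform variable independent of the σ-algebra. So `X₀` is independent of every
`σ(ξ₀, …, ξᵢ)`, and these σ-algebras increase to `σ(ξ₀, ξ₁, …)`, so `X₀` is independent of
their supremum.
-/

open MeasureTheory ProbabilityTheory

/-- The Bernoulli(`p`) measure on `ZMod 2`: mass `p` at `1` and `1 - p` at `0`. -/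
noncomputable def bernoulliZMod2 (p : ℝ) : Measure (ZMod 2) :=
  ENNReal.ofReal p • Measure.dirac 1 + ENNReal.ofReal (1 - p) • Measure.dirac 0

open Finset

section

variable {Ω β : Type*} {m mΩ : MeasurableSpace Ω} {μ : Measure Ω}

theorem sum_measure_preimage_singleton_inter (s : Finset β) {f : Ω → β}
    (hf : ∀ b ∈ s, MeasurableSet (f ⁻¹' {b})) (t : Set Ω) :
    ∑ b ∈ s, μ (f ⁻¹' {b} ∩ t) = μ (f ⁻¹' ↑s ∩ t) := by
  have hs : MeasurableSet (f ⁻¹' ↑s) := by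
    rw [← Finset.set_biUnion_preimage_singleton]
    exact Finset.measurableSet_biUnion s hf
  rw [← Measure.restrict_apply hs, ← sum_measure_preimage_singleton s hf]
  exact Finset.sum_congr rfl fun b hb => (Measure.restrict_apply (hf b hb)).symm

theorem indep_comap_of_measure_preimage_singleton_inter [Fintype β] [MeasurableSpace β]
    [MeasurableSingletonClass β] {X : Ω → β} (hX : Measurable X)
    (h : ∀ b C, MeasurableSet[m] C → μ (X ⁻¹' {b} ∩ C) = μ (X ⁻¹' {b}) * μ C) :
    Indep (MeasurableSpace.comap X ‹_›) m μ := by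
  classical
  rw [Indep_iff]
  rintro _ C ⟨B, -, rfl⟩ hC
  have hfib : ∀ b ∈ B.toFinset, MeasurableSet (X ⁻¹' {b}) :=
    fun b _ => hX (measurableSet_singleton b)
  rw [← Set.coe_toFinset B, ← sum_measure_preimage_singleton_inter _ hfib,
    ← sum_measure_preimage_singleton _ hfib, Finset.sum_mul]
  exact Finset.sum_congr rfl fun b _ => h b C hC

theorem ProbabilityTheory.Indep.comap_congr [MeasurableSpace β] {f g : Ω → β}
    (h : Indep (MeasurableSpace.comap f ‹_›) m μ) (hfg : f =ᵐ[μ] g) :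
    Indep (MeasurableSpace.comap g ‹_›) m μ := by
  rw [Indep_iff] at h ⊢
  rintro _ C ⟨B, hB, rfl⟩ hC
  have hpre : g ⁻¹' B =ᵐ[μ] f ⁻¹' B := (hfg.preimage B).symm
  rw [measure_congr (hpre.inter (ae_eq_refl C)), measure_congr hpre]
  exact h _ _ ⟨B, hB, rfl⟩ hC

end

section UniformShift

variable {Ω G : Type*} {m mΩ : MeasurableSpace Ω} {μ : Measure Ω}
  [AddGroup G] [Fintype G] [MeasurableSpace G] [DiscreteMeasurableSpace G]
  {S Y : Ω → G} {u : ENNReal}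

theorem measure_add_preimage_singleton_inter (hm : m ≤ mΩ) (hS : Measurable[m] S)
    (hindep : Indep (MeasurableSpace.comap Y ‹_›) m μ) (hunif : ∀ g, μ (Y ⁻¹' {g}) = u)
    (c : G) {C : Set Ω} (hC : MeasurableSet[m] C) :
    μ ((S + Y) ⁻¹' {c} ∩ C) = u * μ C := by
  have hSfib : ∀ s ∈ (univ : Finset G), MeasurableSet[m] (S ⁻¹' {s}) :=
    fun s _ => hS (measurableSet_singleton s)
  have hSfib' : ∀ s ∈ (univ : Finset G), MeasurableSet (S ⁻¹' {s}) :=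
    fun s hs => hm _ (hSfib s hs)
  have hfiber (s : G) :
      S ⁻¹' {s} ∩ ((S + Y) ⁻¹' {c} ∩ C) = Y ⁻¹' {-s + c} ∩ (S ⁻¹' {s} ∩ C) := by
    ext ω
    simp only [Set.mem_inter_iff, Set.mem_preimage, Set.mem_singleton_iff, Pi.add_apply,
      eq_neg_add_iff_add_eq]
    constructor
    · rintro ⟨rfl, h, hω⟩; exact ⟨h, rfl, hω⟩
    · rintro ⟨h, rfl, hω⟩; exact ⟨rfl, h, hω⟩
  calc μ ((S + Y) ⁻¹' {c} ∩ C)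
      = ∑ s, μ (Y ⁻¹' {-s + c} ∩ (S ⁻¹' {s} ∩ C)) := by
        simp_rw [← hfiber]
        rw [sum_measure_preimage_singleton_inter _ hSfib']
        simp
    _ = ∑ s, u * μ (S ⁻¹' {s} ∩ C) := by
        refine Finset.sum_congr rfl fun s _ => ?_
        rw [← hunif (-s + c)]
        exact (Indep_iff _ _ μ).mp hindep _ _ ⟨_, measurableSet_singleton _, rfl⟩
          ((hSfib s (mem_univ s)).inter hC)
    _ = u * μ C := by
        rw [← Finset.mul_sum, sum_measure_preimage_singleton_inter _ hSfib']
        simp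

theorem indep_comap_add_of_uniform [IsProbabilityMeasure μ] (hm : m ≤ mΩ) (hS : Measurable[m] S)
    (hY : Measurable Y) (hindep : Indep (MeasurableSpace.comap Y ‹_›) m μ)
    (hunif : ∀ g, μ (Y ⁻¹' {g}) = u) :
    Indep (MeasurableSpace.comap (S + Y) ‹_›) m μ := by
  refine indep_comap_of_measure_preimage_singleton_inter ((hS.mono hm le_rfl).add hY)
    fun c C hC => ?_
  have hmass : μ ((S + Y) ⁻¹' {c}) = u := by
    simpa using measure_add_preimage_singleton_inter hm hS hindep hunif c MeasurableSet.univ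
  rw [hmass, measure_add_preimage_singleton_inter hm hS hindep hunif c hC]

end UniformShift

theorem ae_eq_sum_range_add_of_ae_eq_add_succ {Ω M : Type*} {mΩ : MeasurableSpace Ω}
    {μ : Measure Ω} [AddCommMonoid M] {ξ X : ℕ → Ω → M} (hrec : ∀ i, X i =ᵐ[μ] ξ i + X (i + 1))
    (n : ℕ) : X 0 =ᵐ[μ] fun ω => ∑ j ∈ range n, ξ j ω + X n ω := by
  induction n with
  | zero => simp
  | succ n ih =>
    filter_upwards [ih, hrec n] with ω h0 hn
    simp only [Pi.add_apply] at hn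
    rw [h0, hn, Finset.sum_range_succ, add_assoc]

theorem bernoulliZMod2_half_singleton (g : ZMod 2) :
    bernoulliZMod2 (1 / 2) {g} = ENNReal.ofReal (1 / 2) := by
  obtain rfl | rfl : g = 0 ∨ g = 1 := by revert g; decide
  all_goals norm_num [bernoulliZMod2]

theorem stmt_4_general {Ω : Type*} {F : MeasurableSpace Ω} (P : Measure Ω) [IsProbabilityMeasure P]
    (ξ X : ℕ → Ω → ZMod 2)
    (hξmeas : ∀ i, Measurable (ξ i)) (hXmeas : ∀ i, Measurable (X i))
    (hXdist : ∀ i, Measure.map (X i) P = bernoulliZMod2 (1/2))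
    (hrec : ∀ i, X i =ᵐ[P] fun ω => ξ i ω + X (i+1) ω)
    (hindep : ∀ i, Indep (MeasurableSpace.comap (X (i+1)) inferInstance)
      (⨆ j ∈ Set.Iic i, MeasurableSpace.comap (ξ j) inferInstance) P) :
    Indep (MeasurableSpace.comap (X 0) inferInstance)
      (⨆ j, MeasurableSpace.comap (ξ j) inferInstance) P := by
  set 𝓕 := partialSups fun j => MeasurableSpace.comap (ξ j) inferInstance
  have h𝓕 : ∀ i, (⨆ j ∈ Set.Iic i, MeasurableSpace.comap (ξ j) inferInstance) = 𝓕 i :=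
    fun i => (partialSups_eq_biSup _ i).symm
  have h𝓕_le : ∀ i, 𝓕 i ≤ F := fun i => partialSups_le _ i F fun j _ => (hξmeas j).comap_le
  have hunif : ∀ i g, P (X i ⁻¹' {g}) = ENNReal.ofReal (1 / 2) := fun i g => by
    rw [← Measure.map_apply (hXmeas i) (measurableSet_singleton g), hXdist i,
      bernoulliZMod2_half_singleton]
  have hsum_meas : ∀ i, Measurable[𝓕 i] fun ω => ∑ j ∈ range (i + 1), ξ j ω := fun i =>
    Finset.measurable_sum _ fun j hj => (comap_measurable (ξ j)).mono
      (le_partialSups_of_le (fun j => MeasurableSpace.comap (ξ j) inferInstance)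
        (mem_range_succ_iff.mp hj)) le_rfl
  have hindep_𝓕 : ∀ i, Indep (MeasurableSpace.comap (X 0) inferInstance) (𝓕 i) P := fun i =>
    (indep_comap_add_of_uniform (h𝓕_le i) (hsum_meas i) (hXmeas (i + 1))
      (h𝓕 i ▸ hindep i) (hunif (i + 1))).comap_congr
      (ae_eq_sum_range_add_of_ae_eq_add_succ hrec (i + 1)).symm
  rw [← iSup_partialSups_eq]
  exact (indep_iSup_of_monotone (fun i => (hindep_𝓕 i).symm) h𝓕_le (hXmeas 0).comap_le
    (partialSups _).monotone).symm

/-- For the mod-2 addition RDE, the root variable `X₀` of the associated RTP is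
independent of the innovation σ-algebra `σ(ξ₀, ξ₁, …)`. -/
theorem stmt_4 {Ω : Type*} {F : MeasurableSpace Ω} (P : Measure Ω) [IsProbabilityMeasure P]
    (q : ℝ) (hq : q ∈ Set.Ioo (0:ℝ) 1)
    (ξ X : ℕ → Ω → ZMod 2)
    (hξmeas : ∀ i, Measurable (ξ i)) (hXmeas : ∀ i, Measurable (X i))
    (hξiid : iIndepFun ξ P)
    (hξdist : ∀ i, Measure.map (ξ i) P = bernoulliZMod2 q)
    (hXdist : ∀ i, Measure.map (X i) P = bernoulliZMod2 (1/2))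
    (hrec : ∀ i, X i =ᵐ[P] fun ω => ξ i ω + X (i+1) ω)
    (hindep : ∀ i, Indep (MeasurableSpace.comap (X (i+1)) inferInstance)
      (⨆ j ∈ Set.Iic i, MeasurableSpace.comap (ξ j) inferInstance) P) :
    Indep (MeasurableSpace.comap (X 0) inferInstance)
      (⨆ j, MeasurableSpace.comap (ξ j) inferInstance) P :=
  stmt_4_general (F := F) P ξ X hξmeas hXmeas hXdist hrec hindep
end

section
/- Let D = [1/2,1]² and let G₀(x,y) = 1/(4xy) on D. Suppose G: D → [0,1] is a measurable function with G(x, 1/2) = 1/(2x), G(1/2, y) = 1/(2y), G(x,y) ≤ min(1/(2x), 1/(2y)), and such that H := 1 − G/G₀ satisfies, for all (x,y) ∈ D: H(x,y)·(2+H(x,y))/(16xy) = ∫_{1/2}^x ∫_{1/2}^y G₀²(u,v)H(u,v)(2−H(u,v)) dv du − x∫_{1/2}^y G₀²(x,v)H(x,v)(2−H(x,v)) dv − y∫_{1/2}^x G₀²(u,y)H(u,y)(2−H(u,y)) du. Then H ≡ 0 on D, i.e., G = G₀ on D. -/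
/-!
Write `d = G - G₀` and `e = G² - G₀² = d (G + G₀)`. The integrand `G₀² H (2 - H)` is `-e`, and the
left-hand side `H (2 + H) / (16 x y)` factors as `d (x y G - 3/4)`. As `0 ≤ x y G ≤ 1/2` by the
bound `G ≤ 1/(2x)`, the second factor has modulus at least `1/4`; together with `|e| ≤ 2 |d|` this
gives the linear Volterra inequality `|d| ≤ 8 (∬ |d| + ∫ |d| dv + ∫ |d| du)` on `D`. Iterating it
bounds `|d (x, y)|` by `C^n (x + y - 1)^n / n!`, which tends to zero.
-/

open MeasureTheory Set Function Filter Topology Nat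

section Integrability

variable {f : ℝ → ℝ → ℝ} {g h : ℝ → ℝ} {a b c d C : ℝ}

lemma intervalIntegrable_of_abs_le (hg : AEStronglyMeasurable g) (hab : a ≤ b)
    (hC : ∀ t ∈ Icc a b, |g t| ≤ C) : IntervalIntegrable g volume a b :=
  intervalIntegrable_const.mono_fun' hg.restrict <|
    (ae_restrict_iff' measurableSet_uIoc).2 <| Eventually.of_forall fun t ht =>
      hC t (Ioc_subset_Icc_self (uIoc_of_le hab ▸ ht))

lemma abs_integral_le_of_abs_le (hab : a ≤ b) (hh : IntervalIntegrable h volume a b)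
    (hle : ∀ t ∈ Icc a b, |g t| ≤ h t) : |∫ t in a..b, g t| ≤ ∫ t in a..b, h t :=
  intervalIntegral.norm_integral_le_of_norm_le hab (Eventually.of_forall fun t ht =>
    (Real.norm_eq_abs _).trans_le (hle t (Ioc_subset_Icc_self ht))) hh

lemma stronglyMeasurable_intervalIntegral_right (hf : Measurable (uncurry f)) (c d : ℝ) :
    StronglyMeasurable fun x => ∫ y in c..d, f x y :=
  (hf.stronglyMeasurable.integral_prod_right (ν := volume.restrict (Ioc c d))).sub
    (hf.stronglyMeasurable.integral_prod_right (ν := volume.restrict (Ioc d c)))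

lemma intervalIntegrable_intervalIntegral (hf : Measurable (uncurry f)) (hab : a ≤ b)
    (hC : ∀ x ∈ Icc a b, ∀ y ∈ uIcc c d, |f x y| ≤ C) :
    IntervalIntegrable (fun x => ∫ y in c..d, f x y) volume a b :=
  intervalIntegrable_of_abs_le
    (stronglyMeasurable_intervalIntegral_right hf c d).aestronglyMeasurable hab fun x hx =>
      intervalIntegral.norm_integral_le_of_norm_le_const fun y hy =>
        (Real.norm_eq_abs _).trans_le (hC x hx y (uIoc_subset_uIcc hy))

end Integrability

lemma integral_le_of_le_pow_div_factorial {g : ℝ → ℝ} {α β p C : ℝ} (n : ℕ) (hαβ : α ≤ β)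
    (hp : 0 ≤ p) (hC : 0 ≤ C) (hg : IntervalIntegrable g volume α β)
    (hle : ∀ t ∈ Icc α β, g t ≤ C * (p + (t - α)) ^ n / n !) :
    ∫ t in α..β, g t ≤ C * (p + (β - α)) ^ (n + 1) / (n + 1)! := by
  have h_pow : ∫ t in α..β, (p + (t - α)) ^ n =
      ((p + (β - α)) ^ (n + 1) - p ^ (n + 1)) / (n + 1) := by
    simp_rw [show ∀ t, p + (t - α) = t - (α - p) from fun t => by ring]
    rw [intervalIntegral.integral_comp_sub_right (· ^ n), integral_pow]
    ring_nf
  calc ∫ t in α..β, g t ≤ ∫ t in α..β, C / n ! * (p + (t - α)) ^ n :=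
        intervalIntegral.integral_mono_on hαβ hg
          ((by fun_prop : Continuous fun t => C / n ! * (p + (t - α)) ^ n).intervalIntegrable _ _)
          fun t ht => (hle t ht).trans_eq (by ring)
    _ = C / n ! * (((p + (β - α)) ^ (n + 1) - p ^ (n + 1)) / (n + 1)) := by
        rw [intervalIntegral.integral_const_mul, h_pow]
    _ ≤ C / n ! * ((p + (β - α)) ^ (n + 1) / (n + 1)) := by
        gcongr
        exact sub_le_self _ (by positivity)
    _ = C * (p + (β - α)) ^ (n + 1) / (n + 1)! := by
        rw [Nat.factorial_succ]
        push_cast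
        field_simp

section Volterra

variable {f : ℝ → ℝ → ℝ} {a b c d x y C K M : ℝ} {n : ℕ}

lemma volterra_integrals_le_of_le_pow (hf : Measurable (uncurry f)) (hC : 0 ≤ C)
    (hfM : ∀ x ∈ Icc a b, ∀ y ∈ Icc c d, |f x y| ≤ M)
    (hpow : ∀ x ∈ Icc a b, ∀ y ∈ Icc c d, f x y ≤ C * (x - a + (y - c)) ^ n / n !)
    (hx : x ∈ Icc a b) (hy : y ∈ Icc c d) :
    (∫ u in a..x, ∫ v in c..y, f u v) + (∫ v in c..y, f x v) + ∫ u in a..x, f u y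
      ≤ (b - a + 2) * (C * (x - a + (y - c)) ^ (n + 1) / (n + 1)!) := by
  have hxa := sub_nonneg.2 hx.1
  have hyc := sub_nonneg.2 hy.1
  have h_inner : ∀ u ∈ Icc a x,
      ∫ v in c..y, f u v ≤ C * (x - a + (y - c)) ^ (n + 1) / (n + 1)! := by
    intro u hu
    have hu' : u ∈ Icc a b := Icc_subset_Icc_right hx.2 hu
    calc ∫ v in c..y, f u v ≤ C * (u - a + (y - c)) ^ (n + 1) / (n + 1)! :=
          integral_le_of_le_pow_div_factorial n hy.1 (sub_nonneg.2 hu.1) hC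
            (intervalIntegrable_of_abs_le (hf.comp measurable_prodMk_left).aestronglyMeasurable
              hy.1 fun v hv => hfM u hu' v (Icc_subset_Icc_right hy.2 hv))
            fun v hv => hpow u hu' v (Icc_subset_Icc_right hy.2 hv)
      _ ≤ C * (x - a + (y - c)) ^ (n + 1) / (n + 1)! := by
          have := sub_nonneg.2 hu.1
          gcongr
          exact hu.2
  have h_outer : ∫ u in a..x, f u y ≤ C * (x - a + (y - c)) ^ (n + 1) / (n + 1)! := by
    rw [add_comm (x - a)]
    refine integral_le_of_le_pow_div_factorial n hx.1 hyc hC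
      (intervalIntegrable_of_abs_le (hf.comp measurable_prodMk_right).aestronglyMeasurable
        hx.1 fun u hu => hfM u (Icc_subset_Icc_right hx.2 hu) y hy) fun u hu => ?_
    rw [add_comm]
    exact hpow u (Icc_subset_Icc_right hx.2 hu) y hy
  have h_double : ∫ u in a..x, ∫ v in c..y, f u v
      ≤ (x - a) * (C * (x - a + (y - c)) ^ (n + 1) / (n + 1)!) := by
    refine (intervalIntegral.integral_mono_on hx.1 ?_ intervalIntegrable_const h_inner).trans_eq
      (by simp only [intervalIntegral.integral_const, smul_eq_mul])
    exact intervalIntegrable_intervalIntegral hf hx.1 fun u hu v hv =>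
      hfM u (Icc_subset_Icc_right hx.2 hu) v (Icc_subset_Icc_right hy.2 (uIcc_of_le hy.1 ▸ hv))
  have h_section := h_inner x (right_mem_Icc.2 hx.1)
  have hB : 0 ≤ C * (x - a + (y - c)) ^ (n + 1) / (n + 1)! := by positivity
  nlinarith [hx.2]

lemma le_pow_div_factorial_of_le_volterra (hf : Measurable (uncurry f)) (hK : 0 ≤ K)
    (hM : 0 ≤ M) (h0 : ∀ x ∈ Icc a b, ∀ y ∈ Icc c d, 0 ≤ f x y)
    (hfM : ∀ x ∈ Icc a b, ∀ y ∈ Icc c d, f x y ≤ M)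
    (hle : ∀ x ∈ Icc a b, ∀ y ∈ Icc c d,
      f x y ≤ K * ((∫ u in a..x, ∫ v in c..y, f u v) + (∫ v in c..y, f x v) + ∫ u in a..x, f u y))
    (n : ℕ) : ∀ x ∈ Icc a b, ∀ y ∈ Icc c d,
      f x y ≤ M * (K * (b - a + 2)) ^ n * (x - a + (y - c)) ^ n / n ! := by
  have habs : ∀ x ∈ Icc a b, ∀ y ∈ Icc c d, |f x y| ≤ M := fun x hx y hy =>
    abs_le.2 ⟨by linarith [h0 x hx y hy], hfM x hx y hy⟩
  induction n with
  | zero => simpa using hfM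
  | succ n ih =>
    intro x hx y hy
    have hba : 0 ≤ b - a + 2 := by linarith [hx.1, hx.2]
    calc f x y ≤ K * ((b - a + 2) *
          (M * (K * (b - a + 2)) ^ n * (x - a + (y - c)) ^ (n + 1) / (n + 1)!)) :=
          (hle x hx y hy).trans <| by
            gcongr
            exact volterra_integrals_le_of_le_pow hf (by positivity) habs ih hx hy
      _ = M * (K * (b - a + 2)) ^ (n + 1) * (x - a + (y - c)) ^ (n + 1) / (n + 1)! := by ring

theorem eq_zero_of_le_volterra (hf : Measurable (uncurry f)) (hK : 0 ≤ K)
    (h0 : ∀ x ∈ Icc a b, ∀ y ∈ Icc c d, 0 ≤ f x y)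
    (hfM : ∀ x ∈ Icc a b, ∀ y ∈ Icc c d, f x y ≤ M)
    (hle : ∀ x ∈ Icc a b, ∀ y ∈ Icc c d,
      f x y ≤ K * ((∫ u in a..x, ∫ v in c..y, f u v) + (∫ v in c..y, f x v) + ∫ u in a..x, f u y)) :
    ∀ x ∈ Icc a b, ∀ y ∈ Icc c d, f x y = 0 := by
  intro x hx y hy
  have hM : 0 ≤ M := (h0 x hx y hy).trans (hfM x hx y hy)
  have hlim : Tendsto (fun n : ℕ => M * ((K * (b - a + 2) * (x - a + (y - c))) ^ n / n !))
      atTop (𝓝 0) := by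
    simpa using (FloorSemiring.tendsto_pow_div_factorial_atTop _).const_mul M
  refine le_antisymm (ge_of_tendsto' hlim fun n => ?_) (h0 x hx y hy)
  calc f x y ≤ M * (K * (b - a + 2)) ^ n * (x - a + (y - c)) ^ n / n ! :=
        le_pow_div_factorial_of_le_volterra hf hK hM h0 hfM hle n x hx y hy
    _ = _ := by simp only [mul_pow]; ring

end Volterra

lemma abs_le_volterra_of_mul_eq {d e w : ℝ → ℝ → ℝ} (hd : Measurable (uncurry d))
    (hd1 : ∀ x ∈ Icc (1/2:ℝ) 1, ∀ y ∈ Icc (1/2:ℝ) 1, |d x y| ≤ 1)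
    (hed : ∀ x ∈ Icc (1/2:ℝ) 1, ∀ y ∈ Icc (1/2:ℝ) 1, |e x y| ≤ 2 * |d x y|)
    (hw : ∀ x ∈ Icc (1/2:ℝ) 1, ∀ y ∈ Icc (1/2:ℝ) 1, 1/4 ≤ |w x y|)
    (h : ∀ x ∈ Icc (1/2:ℝ) 1, ∀ y ∈ Icc (1/2:ℝ) 1, d x y * w x y =
      -(∫ u in (1/2:ℝ)..x, ∫ v in (1/2:ℝ)..y, e u v) + x * (∫ v in (1/2:ℝ)..y, e x v)
        - x * (y - 1/2) * y * ∫ u in (1/2:ℝ)..x, e u y) :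
    ∀ x ∈ Icc (1/2:ℝ) 1, ∀ y ∈ Icc (1/2:ℝ) 1, |d x y| ≤
      8 * ((∫ u in (1/2:ℝ)..x, ∫ v in (1/2:ℝ)..y, |d u v|) + (∫ v in (1/2:ℝ)..y, |d x v|)
        + ∫ u in (1/2:ℝ)..x, |d u y|) := by
  intro x hx y hy
  have hsub {s : ℝ} (hs : s ∈ Icc (1/2:ℝ) 1) : Icc (1/2:ℝ) s ⊆ Icc (1/2:ℝ) 1 :=
    Icc_subset_Icc_right hs.2
  have h_inner : ∀ u ∈ Icc (1/2:ℝ) 1,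
      |∫ v in (1/2:ℝ)..y, e u v| ≤ 2 * ∫ v in (1/2:ℝ)..y, |d u v| := by
    intro u hu
    rw [← intervalIntegral.integral_const_mul]
    refine abs_integral_le_of_abs_le hy.1 (IntervalIntegrable.const_mul ?_ 2)
      fun v hv => hed u hu v (hsub hy hv)
    exact intervalIntegrable_of_abs_le (hd.comp measurable_prodMk_left).abs.aestronglyMeasurable
      hy.1 fun v hv => (abs_abs _).trans_le (hd1 u hu v (hsub hy hv))
  have h_outer : |∫ u in (1/2:ℝ)..x, e u y| ≤ 2 * ∫ u in (1/2:ℝ)..x, |d u y| := by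
    rw [← intervalIntegral.integral_const_mul]
    refine abs_integral_le_of_abs_le hx.1 (IntervalIntegrable.const_mul ?_ 2)
      fun u hu => hed u (hsub hx hu) y hy
    exact intervalIntegrable_of_abs_le (hd.comp measurable_prodMk_right).abs.aestronglyMeasurable
      hx.1 fun u hu => (abs_abs _).trans_le (hd1 u (hsub hx hu) y hy)
  have h_double : |∫ u in (1/2:ℝ)..x, ∫ v in (1/2:ℝ)..y, e u v|
      ≤ 2 * ∫ u in (1/2:ℝ)..x, ∫ v in (1/2:ℝ)..y, |d u v| := by
    rw [← intervalIntegral.integral_const_mul]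
    refine abs_integral_le_of_abs_le hx.1 (IntervalIntegrable.const_mul ?_ 2)
      fun u hu => h_inner u (hsub hx hu)
    exact intervalIntegrable_intervalIntegral (f := fun u v => |d u v|) hd.abs hx.1
      fun u hu v hv => (abs_abs _).trans_le
        (hd1 u (hsub hx hu) v (hsub hy (uIcc_of_le hy.1 ▸ hv)))
  have hx_le : |x| ≤ 1 := abs_le.2 ⟨by linarith [hx.1], hx.2⟩
  have hcoef_le : |x * (y - 1/2) * y| ≤ 1 := by
    have h0 : 0 ≤ x * (y - 1/2) := mul_nonneg (by linarith [hx.1]) (by linarith [hy.1])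
    have h1 : x * (y - 1/2) ≤ 1 * 1 :=
      mul_le_mul hx.2 (by linarith [hy.2]) (by linarith [hy.1]) zero_le_one
    rw [abs_of_nonneg (mul_nonneg h0 (by linarith [hy.1]))]
    nlinarith [hy.2]
  calc |d x y| ≤ 4 * |d x y * w x y| := by
        rw [abs_mul]
        nlinarith [hw x hx y hy, abs_nonneg (d x y)]
    _ ≤ 4 * (|∫ u in (1/2:ℝ)..x, ∫ v in (1/2:ℝ)..y, e u v| + |∫ v in (1/2:ℝ)..y, e x v|
          + |∫ u in (1/2:ℝ)..x, e u y|) := by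
        rw [h x hx y hy, sub_eq_add_neg]
        gcongr
        refine (abs_add_three _ _ _).trans ?_
        simp only [abs_neg, abs_mul]
        gcongr
        · exact mul_le_of_le_one_left (abs_nonneg _) hx_le
        · rw [← abs_mul, ← abs_mul]
          exact mul_le_of_le_one_left (abs_nonneg _) hcoef_le
    _ ≤ 8 * ((∫ u in (1/2:ℝ)..x, ∫ v in (1/2:ℝ)..y, |d u v|) + (∫ v in (1/2:ℝ)..y, |d x v|)
          + ∫ u in (1/2:ℝ)..x, |d u y|) := by
        linarith [h_double, h_inner x hx, h_outer]

lemma one_div_four_mul_mem_Icc {x y : ℝ} (hx : x ∈ Icc (1/2:ℝ) 1) (hy : y ∈ Icc (1/2:ℝ) 1) :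
    1 / (4 * x * y) ∈ Icc (0:ℝ) 1 := by
  have h : 1 ≤ 4 * x * y := by nlinarith [hx.1, hy.1]
  exact ⟨by positivity, (div_le_one (by linarith)).2 h⟩

lemma abs_sq_sub_sq_le_two_mul_abs_sub {p q : ℝ} (hp : p ∈ Icc (0:ℝ) 1) (hq : q ∈ Icc (0:ℝ) 1) :
    |p ^ 2 - q ^ 2| ≤ 2 * |p - q| := by
  rw [show p ^ 2 - q ^ 2 = (p + q) * (p - q) by ring, abs_mul,
    abs_of_nonneg (add_nonneg hp.1 hq.1)]
  gcongr
  linarith [hp.2, hq.2]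

lemma intervalIntegrable_sq_sub_sq {G : ℝ → ℝ → ℝ} (hmeas : Measurable fun p : ℝ × ℝ => G p.1 p.2)
    (hrange : ∀ x ∈ Icc (1/2:ℝ) 1, ∀ y ∈ Icc (1/2:ℝ) 1, G x y ∈ Icc (0:ℝ) 1)
    {x y : ℝ} (hx : x ∈ Icc (1/2:ℝ) 1) (hy : y ∈ Icc (1/2:ℝ) 1) :
    IntervalIntegrable (fun v => G x v ^ 2 - (1/(4*x*v)) ^ 2) volume (1/2) y := by
  refine intervalIntegrable_of_abs_le (C := 1) ?_ hy.1 fun v hv => ?_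
  · exact ((hmeas.comp measurable_prodMk_left).pow_const 2).sub (by fun_prop)
      |>.aestronglyMeasurable
  · have hv' := Icc_subset_Icc_right hy.2 hv
    have hG := hrange x hx v hv'
    have hG₀ := one_div_four_mul_mem_Icc hx hv'
    exact abs_sub_le_of_nonneg_of_le (sq_nonneg _) (pow_le_one₀ hG.1 hG.2)
      (sq_nonneg _) (pow_le_one₀ hG₀.1 hG₀.2)

lemma sq_mul_mul_two_sub_eq_neg_sq_sub_sq {G H G₀ : ℝ → ℝ → ℝ}
    (hH : ∀ x y : ℝ, H x y = 1 - G x y / (1/(4*x*y))) (hG₀ : ∀ x y : ℝ, G₀ x y = 1/(4*x*y))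
    {u v : ℝ} (hu : u ≠ 0) (hv : v ≠ 0) :
    G₀ u v ^ 2 * H u v * (2 - H u v) = -(G u v ^ 2 - (1/(4*u*v)) ^ 2) := by
  rw [hG₀, hH]
  field_simp
  ring

lemma sub_mul_sub_eq_of_integral_equation {G H G₀ : ℝ → ℝ → ℝ}
    (hmeas : Measurable fun p : ℝ × ℝ => G p.1 p.2)
    (hrange : ∀ x ∈ Icc (1/2:ℝ) 1, ∀ y ∈ Icc (1/2:ℝ) 1, G x y ∈ Icc (0:ℝ) 1)
    (hH : ∀ x y : ℝ, H x y = 1 - G x y / (1/(4*x*y)))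
    (hG₀ : ∀ x y : ℝ, G₀ x y = 1/(4*x*y))
    (heq : ∀ x ∈ Icc (1/2:ℝ) 1, ∀ y ∈ Icc (1/2:ℝ) 1,
      H x y * (2 + H x y) / (16*x*y) =
        (∫ u in (1/2:ℝ)..x, ∫ v in (1/2:ℝ)..y,
            (G₀ u v)^2 * H u v * (2 - H u v))
          - x * ∫ v in (1/2:ℝ)..y, (G₀ x v)^2 * H x v * (2 - H x v)
          - y * ∫ u in (1/2:ℝ)..x, (G₀ u y)^2 * H u y * (2 - H u y)) :
    ∀ x ∈ Icc (1/2:ℝ) 1, ∀ y ∈ Icc (1/2:ℝ) 1,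
      (G x y - 1/(4*x*y)) * (x*y*G x y - 3/4) =
        -(∫ u in (1/2:ℝ)..x, ∫ v in (1/2:ℝ)..y, (G u v ^ 2 - (1/(4*u*v)) ^ 2))
          + x * (∫ v in (1/2:ℝ)..y, (G x v ^ 2 - (1/(4*x*v)) ^ 2))
          - x * (y - 1/2) * y * ∫ u in (1/2:ℝ)..x, (G u y ^ 2 - (1/(4*u*y)) ^ 2) := by
  intro x hx y hy
  have hne {s : ℝ} (hs : s ∈ Icc (1/2:ℝ) 1) : s ≠ 0 := by linarith [hs.1]
  have hne' {s t : ℝ} (hs : s ∈ Icc (1/2:ℝ) 1) (ht : t ∈ uIcc (1/2:ℝ) s) : t ≠ 0 := by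
    rw [uIcc_of_le hs.1] at ht
    linarith [ht.1]
  have h_integrand {u v : ℝ} (hu : u ≠ 0) (hv : v ≠ 0) :=
    sq_mul_mul_two_sub_eq_neg_sq_sub_sq hH hG₀ hu hv
  have h_inner : ∀ u ≠ 0, ∫ v in (1/2:ℝ)..y, G₀ u v ^ 2 * H u v * (2 - H u v)
      = -∫ v in (1/2:ℝ)..y, (G u v ^ 2 - (1/(4*u*v)) ^ 2) := fun u hu => by
    rw [← intervalIntegral.integral_neg]
    exact intervalIntegral.integral_congr fun v hv => h_integrand hu (hne' hy hv)
  have h_double : ∫ u in (1/2:ℝ)..x, ∫ v in (1/2:ℝ)..y, G₀ u v ^ 2 * H u v * (2 - H u v)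
      = -∫ u in (1/2:ℝ)..x, ∫ v in (1/2:ℝ)..y, (G u v ^ 2 - (1/(4*u*v)) ^ 2) := by
    rw [← intervalIntegral.integral_neg]
    exact intervalIntegral.integral_congr fun u hu => h_inner u (hne' hx hu)
  have h_outer : ∫ u in (1/2:ℝ)..x, G₀ u y ^ 2 * H u y * (2 - H u y)
      = -∫ u in (1/2:ℝ)..x, (G u y ^ 2 - (1/(4*u*y)) ^ 2) := by
    rw [← intervalIntegral.integral_neg]
    exact intervalIntegral.integral_congr fun u hu => h_integrand (hne' hx hu) (hne hy)
  have h_section : IntervalIntegrable (fun v => G₀ x v ^ 2 * H x v * (2 - H x v))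
      volume (1/2) y :=
    (intervalIntegrable_sq_sub_sq hmeas hrange hx hy).neg.congr_ae <|
      (ae_restrict_iff' measurableSet_uIoc).2 <| Eventually.of_forall fun v hv =>
        (h_integrand (hne hx) (hne' hy (uIoc_subset_uIcc hv))).symm
  -- `∫ v in _.._, …` extends to the closing parenthesis: in `heq` the `y * ∫ u …` term
  -- is part of the middle integrand
  have h_middle : ∫ v in (1/2:ℝ)..y, (G₀ x v ^ 2 * H x v * (2 - H x v)
        - y * ∫ u in (1/2:ℝ)..x, G₀ u y ^ 2 * H u y * (2 - H u y))
      = -(∫ v in (1/2:ℝ)..y, (G x v ^ 2 - (1/(4*x*v)) ^ 2))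
        + (y - 1/2) * y * ∫ u in (1/2:ℝ)..x, (G u y ^ 2 - (1/(4*u*y)) ^ 2) := by
    rw [intervalIntegral.integral_sub h_section intervalIntegrable_const,
      intervalIntegral.integral_const, smul_eq_mul, h_inner x (hne hx), h_outer]
    ring
  have h_lhs : H x y * (2 + H x y) / (16*x*y) = (G x y - 1/(4*x*y)) * (x*y*G x y - 3/4) := by
    rw [hH]
    field_simp [hne hx, hne hy]
    ring
  rw [← h_lhs, heq x hx y hy, h_double, h_middle]
  ring

lemma quarter_le_abs_mul_mul_sub {x y g : ℝ} (hx : x ∈ Icc (1/2:ℝ) 1) (hy : y ∈ Icc (1/2:ℝ) 1)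
    (hg₀ : 0 ≤ g) (hg : g ≤ 1/(2*x)) : 1/4 ≤ |x * y * g - 3/4| := by
  have hxg : x * g ≤ 1/2 := by
    rw [le_div_iff₀ (by linarith [hx.1])] at hg
    linarith
  have hyxg : y * (x * g) ≤ 1/2 := by
    nlinarith [mul_nonneg (by linarith [hx.1] : (0:ℝ) ≤ x) hg₀, hy.2]
  rw [abs_of_neg (by linarith)]
  linarith

theorem stmt_8_general (G : ℝ → ℝ → ℝ)
    (hmeas : Measurable fun p : ℝ × ℝ => G p.1 p.2)
    (hrange : ∀ x ∈ Set.Icc (1/2:ℝ) 1, ∀ y ∈ Set.Icc (1/2:ℝ) 1,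
      G x y ∈ Set.Icc (0:ℝ) 1)
    (hbound : ∀ x ∈ Set.Icc (1/2:ℝ) 1, ∀ y ∈ Set.Icc (1/2:ℝ) 1,
      G x y ≤ min (1/(2*x)) (1/(2*y)))
    (H : ℝ → ℝ → ℝ) (hH : ∀ x y : ℝ, H x y = 1 - G x y / (1/(4*x*y)))
    (G₀ : ℝ → ℝ → ℝ) (hG₀ : ∀ x y : ℝ, G₀ x y = 1/(4*x*y))
    (heq : ∀ x ∈ Set.Icc (1/2:ℝ) 1, ∀ y ∈ Set.Icc (1/2:ℝ) 1,
      H x y * (2 + H x y) / (16*x*y) =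
        (∫ u in (1/2:ℝ)..x, ∫ v in (1/2:ℝ)..y,
            (G₀ u v)^2 * H u v * (2 - H u v))
          - x * ∫ v in (1/2:ℝ)..y, (G₀ x v)^2 * H x v * (2 - H x v)
          - y * ∫ u in (1/2:ℝ)..x, (G₀ u y)^2 * H u y * (2 - H u y)) :
    ∀ x ∈ Set.Icc (1/2:ℝ) 1, ∀ y ∈ Set.Icc (1/2:ℝ) 1,
      H x y = 0 ∧ G x y = 1/(4*x*y) := by
  have hd_meas : Measurable (uncurry fun x y => G x y - 1/(4*x*y)) :=
    hmeas.sub (by fun_prop)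
  have hd_le_one : ∀ x ∈ Icc (1/2:ℝ) 1, ∀ y ∈ Icc (1/2:ℝ) 1, |G x y - 1/(4*x*y)| ≤ 1 :=
    fun x hx y hy => abs_sub_le_of_nonneg_of_le (hrange x hx y hy).1 (hrange x hx y hy).2
      (one_div_four_mul_mem_Icc hx hy).1 (one_div_four_mul_mem_Icc hx hy).2
  have hd_zero := eq_zero_of_le_volterra (f := fun x y => |G x y - 1/(4*x*y)|) (K := 8)
    hd_meas.abs (by norm_num) (fun _ _ _ _ => abs_nonneg _) hd_le_one <|
    abs_le_volterra_of_mul_eq (e := fun u v => G u v ^ 2 - (1/(4*u*v)) ^ 2) hd_meas hd_le_one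
      (fun x hx y hy => abs_sq_sub_sq_le_two_mul_abs_sub (hrange x hx y hy)
        (one_div_four_mul_mem_Icc hx hy))
      (fun x hx y hy => quarter_le_abs_mul_mul_sub hx hy (hrange x hx y hy).1
        ((hbound x hx y hy).trans (min_le_left _ _)))
      (sub_mul_sub_eq_of_integral_equation hmeas hrange hH hG₀ heq)
  intro x hx y hy
  have hG : G x y = 1/(4*x*y) := sub_eq_zero.1 (abs_eq_zero.1 (hd_zero x hx y hy))
  have hxy : 1/(4*x*y) ≠ 0 := (one_div_pos.2 (by nlinarith [hx.1, hy.1])).ne'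
  exact ⟨by rw [hH, hG, div_self hxy, sub_self], hG⟩

/-- Analytic uniqueness for the bivariate frozen percolation RDE: if `G` on
`D = [1/2,1]²` has the marginal boundary values and bound coming from `ν`, and
`H = 1 - G/G₀` (with `G₀(x,y) = 1/(4xy)`) satisfies the key integral equation,
then `H ≡ 0` on `D`, that is, `G = G₀` on `D`. -/
theorem stmt_8 (G : ℝ → ℝ → ℝ)
    (hmeas : Measurable fun p : ℝ × ℝ => G p.1 p.2)
    (hrange : ∀ x ∈ Set.Icc (1/2:ℝ) 1, ∀ y ∈ Set.Icc (1/2:ℝ) 1,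
      G x y ∈ Set.Icc (0:ℝ) 1)
    (hbdry₁ : ∀ x ∈ Set.Icc (1/2:ℝ) 1, G x (1/2) = 1/(2*x))
    (hbdry₂ : ∀ y ∈ Set.Icc (1/2:ℝ) 1, G (1/2) y = 1/(2*y))
    (hbound : ∀ x ∈ Set.Icc (1/2:ℝ) 1, ∀ y ∈ Set.Icc (1/2:ℝ) 1,
      G x y ≤ min (1/(2*x)) (1/(2*y)))
    (H : ℝ → ℝ → ℝ) (hH : ∀ x y : ℝ, H x y = 1 - G x y / (1/(4*x*y)))
    (G₀ : ℝ → ℝ → ℝ) (hG₀ : ∀ x y : ℝ, G₀ x y = 1/(4*x*y))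
    (heq : ∀ x ∈ Set.Icc (1/2:ℝ) 1, ∀ y ∈ Set.Icc (1/2:ℝ) 1,
      H x y * (2 + H x y) / (16*x*y) =
        (∫ u in (1/2:ℝ)..x, ∫ v in (1/2:ℝ)..y,
            (G₀ u v)^2 * H u v * (2 - H u v))
          - x * ∫ v in (1/2:ℝ)..y, (G₀ x v)^2 * H x v * (2 - H x v)
          - y * ∫ u in (1/2:ℝ)..x, (G₀ u y)^2 * H u y * (2 - H u y)) :
    ∀ x ∈ Set.Icc (1/2:ℝ) 1, ∀ y ∈ Set.Icc (1/2:ℝ) 1,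
      H x y = 0 ∧ G x y = 1/(4*x*y) :=
  stmt_8_general G hmeas hrange hbound H hH G₀ hG₀ heq
end

section
/- Let (Xₙ)_{n≥1} and X be random variables on a probability space with a filtration-like decreasing sequence of σ-algebras (H_n), H = ∩ₙ H_n, such that: (i) each Xₙ and X have the same distribution μ; (ii) given H_n, the variables X and Xₙ are conditionally independent and identically distributed. If for every bounded continuous Λ: S → ℝ, E[(Λ(X) − Λ(Xₙ))²] → 2·Var(Λ(X)) as n → ∞, then for every bounded continuous Λ, E[Λ(X) | H] = E[Λ(X)] almost surely. -/
open MeasureTheory ProbabilityTheory BoundedContinuousFunction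

/-! The conditional i.i.d. structure gives `E[Λ(X) Λ(Xₙ)] = E[E[Λ(X) | Hₙ]²]`, hence
`Var(E[Λ(X) | Hₙ]) = Var(Λ(X)) - ½ E[(Λ(X) - Λ(Xₙ))²]`, which tends to `0` by hypothesis.
Conditioning on a smaller σ-algebra can only decrease the variance of a conditional
expectation, so `Var(E[Λ(X) | H]) = 0` and `E[Λ(X) | H]` is a.s. equal to its mean `E[Λ(X)]`. -/

open Filter Topology

namespace ProbabilityTheory

variable {Ω : Type*} {m₀ : MeasurableSpace Ω} {μ : Measure Ω} [IsProbabilityMeasure μ]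
  {X : Ω → ℝ}

/-- The hypotheses on `Y` hold when `X` and `Y` are conditionally i.i.d. given `m`. -/
lemma variance_condExp_eq_variance_sub_half_integral_sq_sub {m : MeasurableSpace Ω}
    (hm : m ≤ m₀) {Y : Ω → ℝ} (hX : MemLp X 2 μ) (hY : MemLp Y 2 μ)
    (hsq : ∫ ω, Y ω ^ 2 ∂μ = ∫ ω, X ω ^ 2 ∂μ)
    (hmul : μ[X * Y | m] =ᵐ[μ] μ[X | m] * μ[X | m]) :
    Var[μ[X | m]; μ] = Var[X; μ] - 1 / 2 * ∫ ω, (X ω - Y ω) ^ 2 ∂μ := by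
  have hXY : Integrable (X * Y) μ := hX.integrable_mul hY
  have hmul_int : ∫ ω, X ω * Y ω ∂μ = ∫ ω, μ[X | m] ω ^ 2 ∂μ := by
    refine (integral_condExp hm).symm.trans (integral_congr_ae ?_)
    exact hmul.trans (ae_of_all _ fun ω => (sq _).symm)
  have hexpand : ∫ ω, (X ω - Y ω) ^ 2 ∂μ
      = ∫ ω, X ω ^ 2 ∂μ + ∫ ω, Y ω ^ 2 ∂μ - 2 * ∫ ω, X ω * Y ω ∂μ := by
    have hpoint : ∀ ω, (X ω - Y ω) ^ 2 = (X ω ^ 2 + Y ω ^ 2) - 2 * (X ω * Y ω) :=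
      fun ω => by ring
    simp_rw [hpoint]
    rw [integral_sub (f := fun ω => X ω ^ 2 + Y ω ^ 2) (g := fun ω => 2 * (X ω * Y ω))
      (hX.integrable_sq.add hY.integrable_sq) (hXY.const_mul 2),
      integral_add hX.integrable_sq hY.integrable_sq, integral_const_mul]
  rw [variance_eq_sub (hX.condExp one_le_two), variance_eq_sub hX, integral_condExp hm,
    hexpand, hsq, hmul_int]
  simp only [Pi.pow_apply]
  ring

lemma variance_condExp_le {m : MeasurableSpace Ω} (hm : m ≤ m₀) (hX : MemLp X 2 μ) :
    Var[μ[X | m]; μ] ≤ Var[X; μ] := by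
  have hcondVar : 0 ≤ μ[Var[X; μ | m]] :=
    integral_nonneg_of_ae (condExp_nonneg (ae_of_all _ fun _ => sq_nonneg _))
  linarith [integral_condVar_add_variance_condExp hm hX]

lemma variance_condExp_mono {m m' : MeasurableSpace Ω} (hm' : m' ≤ m) (hm : m ≤ m₀)
    (hX : MemLp X 2 μ) : Var[μ[X | m']; μ] ≤ Var[μ[X | m]; μ] := by
  rw [variance_congr (condExp_condExp_of_le hm' hm).symm]
  exact variance_condExp_le (hm'.trans hm) (hX.condExp one_le_two)

lemma condExp_iInf_ae_eq_integral_of_tendsto_variance {ι : Type*} {l : Filter ι} [l.NeBot]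
    {m : ι → MeasurableSpace Ω} (hm : ∀ i, m i ≤ m₀) (hX : MemLp X 2 μ)
    (hvar : Tendsto (fun i => Var[μ[X | m i]; μ]) l (𝓝 0)) :
    μ[X | ⨅ i, m i] =ᵐ[μ] fun _ => μ[X] := by
  obtain ⟨i₀⟩ := l.nonempty_of_neBot
  have hinf : ⨅ i, m i ≤ m₀ := (iInf_le m i₀).trans (hm i₀)
  have hvar_zero : Var[μ[X | ⨅ i, m i]; μ] = 0 :=
    le_antisymm (ge_of_tendsto' hvar fun i => variance_condExp_mono (iInf_le m i) (hm i) hX)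
      (variance_nonneg _ _)
  rw [← integral_condExp hinf]
  exact ae_eq_integral_of_variance_eq_zero (hX.condExp one_le_two) hvar_zero

end ProbabilityTheory

theorem stmt_12_general {Ω : Type*} {F : MeasurableSpace Ω} (P : Measure Ω)
    [IsProbabilityMeasure P]
    {S : Type*} [TopologicalSpace S] [MeasurableSpace S] [BorelSpace S]
    (mH : ℕ → MeasurableSpace Ω) (hH_le : ∀ n, mH n ≤ F)
    (X : Ω → S) (Xn : ℕ → Ω → S)
    (hXmeas : Measurable X) (hXnmeas : ∀ n, Measurable (Xn n))
    -- (i) identical distributions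
    (hid : ∀ n, Measure.map (Xn n) P = Measure.map X P)
    -- (ii) given `Hₙ`, `X` and `Xₙ` are conditionally independent ...
    (hci : ∀ n, ∀ f g : S →ᵇ ℝ,
      condExp (mH n) P (fun ω => f (X ω) * g (Xn n ω)) =ᵐ[P]
        fun ω => condExp (mH n) P (fun ω' => f (X ω')) ω *
          condExp (mH n) P (fun ω' => g (X ω')) ω)
    -- the variance convergence hypothesis
    (hvar : ∀ Λ : S →ᵇ ℝ,
      Filter.Tendsto (fun n => ∫ ω, (Λ (X ω) - Λ (Xn n ω))^2 ∂P) Filter.atTop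
        (nhds (2 * variance (fun ω => Λ (X ω)) P))) :
    ∀ Λ : S →ᵇ ℝ,
      condExp (⨅ n, mH n) P (fun ω => Λ (X ω)) =ᵐ[P]
        fun _ => ∫ ω, Λ (X ω) ∂P := by
  intro Λ
  have hmemLp : ∀ {Z : Ω → S}, Measurable Z → MemLp (fun ω => Λ (Z ω)) 2 P := fun hZ =>
    .of_bound (Λ.continuous.measurable.comp hZ).aestronglyMeasurable ‖Λ‖
      (ae_of_all _ fun ω => Λ.norm_coe_le_norm _)
  refine condExp_iInf_ae_eq_integral_of_tendsto_variance (l := atTop) hH_le (hmemLp hXmeas) ?_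
  have hsq : ∀ n, ∫ ω, Λ (Xn n ω) ^ 2 ∂P = ∫ ω, Λ (X ω) ^ 2 ∂P := fun n =>
    ((IdentDistrib.mk (hXnmeas n).aemeasurable hXmeas.aemeasurable (hid n)).comp
      (Λ.continuous.pow 2).measurable).integral_eq
  have hvar_eq : ∀ n, Var[P[fun ω => Λ (X ω) | mH n]; P]
      = Var[fun ω => Λ (X ω); P] - 1 / 2 * ∫ ω, (Λ (X ω) - Λ (Xn n ω)) ^ 2 ∂P := fun n =>
    variance_condExp_eq_variance_sub_half_integral_sq_sub (hH_le n) (hmemLp hXmeas)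
      (hmemLp (hXnmeas n)) (hsq n) (hci n Λ Λ)
  simp_rw [hvar_eq]
  convert (tendsto_const_nhds (x := Var[fun ω => Λ (X ω); P])).sub
    ((hvar Λ).const_mul (1 / 2)) using 2
  ring

/-- Key step in part (b) of the equivalence theorem: if `X` and `Xₙ` have the same
law, are conditionally i.i.d. given `Hₙ` (with `Hₙ ↓ H`), and for every bounded
continuous `Λ`, `E[(Λ(X) - Λ(Xₙ))²] → 2 Var(Λ(X))`, then `E[Λ(X) | H] = E[Λ(X)]`
a.s. for every bounded continuous `Λ`. -/
theorem stmt_12 {Ω : Type*} {F : MeasurableSpace Ω} (P : Measure Ω)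
    [IsProbabilityMeasure P]
    {S : Type*} [TopologicalSpace S] [PolishSpace S] [MeasurableSpace S] [BorelSpace S]
    (mH : ℕ → MeasurableSpace Ω) (hH_le : ∀ n, mH n ≤ F) (hH_anti : Antitone mH)
    (X : Ω → S) (Xn : ℕ → Ω → S)
    (hXmeas : Measurable X) (hXnmeas : ∀ n, Measurable (Xn n))
    -- (i) identical distributions
    (hid : ∀ n, Measure.map (Xn n) P = Measure.map X P)
    -- (ii) given `Hₙ`, `X` and `Xₙ` are conditionally independent ...
    (hci : ∀ n, ∀ f g : S →ᵇ ℝ,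
      condExp (mH n) P (fun ω => f (X ω) * g (Xn n ω)) =ᵐ[P]
        fun ω => condExp (mH n) P (fun ω' => f (X ω')) ω *
          condExp (mH n) P (fun ω' => g (X ω')) ω)
    -- ... and conditionally identically distributed
    (hcid : ∀ n, ∀ f : S →ᵇ ℝ,
      condExp (mH n) P (fun ω => f (Xn n ω)) =ᵐ[P]
        condExp (mH n) P (fun ω => f (X ω)))
    -- the variance convergence hypothesis
    (hvar : ∀ Λ : S →ᵇ ℝ,
      Filter.Tendsto (fun n => ∫ ω, (Λ (X ω) - Λ (Xn n ω))^2 ∂P) Filter.atTop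
        (nhds (2 * variance (fun ω => Λ (X ω)) P))) :
    ∀ Λ : S →ᵇ ℝ,
      condExp (⨅ n, mH n) P (fun ω => Λ (X ω)) =ᵐ[P]
        fun _ => ∫ ω, Λ (X ω) ∂P :=
  stmt_12_general P mH hH_le X Xn hXmeas hXnmeas hid hci hvar
end
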